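/- arXiv:1610.07307 — 7 statements merged into one kernel-verified Lean document; each statement's English description precedes it below -/
import Mathlib

section
/- Let t be a positive integer and let G = ⟨a, b | a^(3^(t+1)) = b^(3^t) = 1, b^(-1)ab = a^(1+3^t)⟩. Then the map sending a to a^(-2)b and b to a^(3^t - 3)b extends to an automorphism of G. -/
/-!
Write `n = 3^t`. Since `3n ∣ n²`, `b⁻¹ a^n b = a^(n(1+n)) = a^n`, so `a^n` is central and
conjugation by `b^c` sends `a^d` to `a^(d - ndc)`. Hence every element is `a^i b^j`, with
`(a^i b^j)(a^k b^l) = a^(i + k - nkj) b^(j + l)` and `(a^i b^j)^m = a^(im - nij·C(m,2)) b^(jm)`;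
the correction term of the power vanishes as soon as `3 ∣ C(m,2)`, which is the case for the
exponents `3n`, `n` and `1 + n` of the relations. These formulas show that `a' = a⁻²b` and
`b' = a^(n-3)b` satisfy the defining relations, so `a ↦ a'`, `b ↦ b'` is an endomorphism. It is
onto, since `a = b'⁻¹a'` and `b = a²a'`, and `G` is finite, so it is an automorphism.
-/

/-- Relations for the group `⟨a, b | a^(3^(t+1)) = b^(3^t) = 1, b⁻¹ab = a^(1+3^t)⟩`,
with generator `0` playing the role of `a` and `1` the role of `b`. -/
def gRels (t : ℕ) : Set (FreeGroup (Fin 2)) :=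
  { FreeGroup.of 0 ^ 3 ^ (t + 1), FreeGroup.of 1 ^ 3 ^ t,
    (FreeGroup.of 1)⁻¹ * FreeGroup.of 0 * FreeGroup.of 1 *
      (FreeGroup.of 0 ^ (1 + 3 ^ t))⁻¹ }

section SwapFormula

variable {G : Type*} [Group G] {x y : G} {n : ℤ}

theorem zpow_mul_zpow_eq_of_conj (h : y⁻¹ * x * y = x ^ (1 + n))
    (hc : Commute y (x ^ n)) (c d : ℤ) : y ^ c * x ^ d = x ^ (d - n * d * c) * y ^ c := by
  have hz : ∀ k : ℤ, y * x ^ (n * k) * y⁻¹ = x ^ (n * k) := fun k => by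
    rw [zpow_mul, (hc.zpow_right k).eq]; group
  have hz' : ∀ k : ℤ, y⁻¹ * x ^ (n * k) * y = x ^ (n * k) := fun k => by
    rw [zpow_mul, (hc.zpow_right k).inv_left.eq]; group
  have hy : y * x * y⁻¹ = x ^ (1 - n) := by
    calc y * x * y⁻¹ = y * x ^ (1 + n) * y⁻¹ * (y * x ^ (n * 1) * y⁻¹)⁻¹ := by group
      _ = x ^ (1 - n) := by rw [← h, hz]; group
  have hconj : ∀ c : ℤ, y ^ c * x * y ^ (-c) = x ^ (1 - n * c) := by
    intro c
    induction c using Int.induction_on with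
    | zero => simp
    | succ c ih =>
      calc y ^ ((c : ℤ) + 1) * x * y ^ (-((c : ℤ) + 1))
          = y * (y ^ (c : ℤ) * x * y ^ (-(c : ℤ))) * y⁻¹ := by group
        _ = y * x * y⁻¹ * (y * x ^ (n * -c) * y⁻¹) := by rw [ih]; group
        _ = x ^ (1 - n * ((c : ℤ) + 1)) := by rw [hy, hz]; group
    | pred c ih =>
      calc y ^ (-(c : ℤ) - 1) * x * y ^ (-(-(c : ℤ) - 1))
          = y⁻¹ * (y ^ (-(c : ℤ)) * x * y ^ (-(-(c : ℤ)))) * y := by group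
        _ = y⁻¹ * x * y * (y⁻¹ * x ^ (n * c) * y) := by rw [ih]; group
        _ = x ^ (1 - n * (-(c : ℤ) - 1)) := by rw [h, hz']; group
  calc y ^ c * x ^ d = (y ^ c * x * y ^ (-c)) ^ d * y ^ c := by
        rw [zpow_neg, conj_zpow]; group
    _ = x ^ (d - n * d * c) * y ^ c := by rw [hconj]; group

theorem zpow_mul_zpow_mul_zpow_mul_zpow_of_conj (h : y⁻¹ * x * y = x ^ (1 + n))
    (hc : Commute y (x ^ n)) (a c d f : ℤ) :
    x ^ a * y ^ c * (x ^ d * y ^ f) = x ^ (a + d - n * d * c) * y ^ (c + f) := by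
  calc x ^ a * y ^ c * (x ^ d * y ^ f) = x ^ a * (y ^ c * x ^ d) * y ^ f := by group
    _ = _ := by rw [zpow_mul_zpow_eq_of_conj h hc]; group

theorem zpow_mul_zpow_pow_of_conj (h : y⁻¹ * x * y = x ^ (1 + n))
    (hc : Commute y (x ^ n)) (a c : ℤ) (m : ℕ) :
    (x ^ a * y ^ c) ^ m = x ^ (a * m - n * a * c * m.choose 2) * y ^ (c * m) := by
  induction m with
  | zero => simp
  | succ m ih =>
    rw [pow_succ, ih, zpow_mul_zpow_mul_zpow_mul_zpow_of_conj h hc, Nat.choose_succ_succ',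
      Nat.choose_one_right]
    push_cast
    ring_nf

theorem exists_zpow_mul_zpow_eq_of_mem_closure (h : y⁻¹ * x * y = x ^ (1 + n))
    (hc : Commute y (x ^ n)) {g : G} (hg : g ∈ Subgroup.closure {x, y}) :
    ∃ i j : ℤ, x ^ i * y ^ j = g := by
  induction hg using Subgroup.closure_induction with
  | mem g hg =>
    rcases hg with rfl | rfl
    · exact ⟨1, 0, by simp⟩
    · exact ⟨0, 1, by simp⟩
  | one => exact ⟨0, 0, by simp⟩
  | mul g g' _ _ ih ih' =>
    obtain ⟨i, j, rfl⟩ := ih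
    obtain ⟨i', j', rfl⟩ := ih'
    exact ⟨_, _, (zpow_mul_zpow_mul_zpow_mul_zpow_of_conj h hc i j i' j').symm⟩
  | inv g _ ih =>
    obtain ⟨i, j, rfl⟩ := ih
    refine ⟨-i - n * -i * -j, -j, ?_⟩
    rw [← zpow_mul_zpow_eq_of_conj h hc]
    group

end SwapFormula

theorem Nat.dvd_choose_two_of_dvd_mul_pred {k m : ℕ} (hk : Odd k) (h : k ∣ m * (m - 1)) :
    k ∣ m.choose 2 := by
  have h2 : m * (m - 1) = 2 * m.choose 2 := by
    rw [Nat.choose_two_right, Nat.mul_div_cancel' (Nat.even_mul_pred_self m).two_dvd]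
  exact (Nat.Coprime.dvd_mul_left (Nat.coprime_two_right.mpr hk)).mp (h2 ▸ h)

structure MetacyclicRelations {G : Type*} [Group G] (n : ℕ) (x y : G) : Prop where
  pow_left : x ^ (3 * n) = 1
  pow_right : y ^ n = 1
  conj : y⁻¹ * x * y = x ^ (1 + n)

namespace MetacyclicRelations

variable {G : Type*} [Group G] {n : ℕ} {x y : G}

theorem conj_eq_zpow (h : MetacyclicRelations n x y) : y⁻¹ * x * y = x ^ (1 + n : ℤ) := by
  exact_mod_cast h.conj

theorem zpow_left_congr (h : MetacyclicRelations n x y) {i i' : ℤ} (hi : i ≡ i' [ZMOD 3 * n]) :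
    x ^ i = x ^ i' := by
  have hx : x ^ (3 * n : ℤ) = 1 := by exact_mod_cast h.pow_left
  rw [zpow_eq_zpow_emod i hx, zpow_eq_zpow_emod i' hx, hi]

theorem zpow_right_congr (h : MetacyclicRelations n x y) {j j' : ℤ} (hj : j ≡ j' [ZMOD n]) :
    y ^ j = y ^ j' := by
  rw [zpow_eq_zpow_emod' j h.pow_right, zpow_eq_zpow_emod' j' h.pow_right, hj]

theorem commute (h : MetacyclicRelations n x y) (hn : 3 ∣ n) : Commute y (x ^ (n : ℤ)) := by
  have hconj : y⁻¹ * x ^ (n : ℤ) * y = x ^ (n : ℤ) := by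
    have := _root_.conj_zpow (a := y⁻¹) (b := x) (i := n)
    rw [inv_inv] at this
    rw [← this, h.conj_eq_zpow, ← zpow_mul]
    obtain ⟨k, rfl⟩ := hn
    exact h.zpow_left_congr (Int.modEq_iff_dvd.mpr ⟨-k, by push_cast; ring⟩)
  calc y * x ^ (n : ℤ) = y * (y⁻¹ * x ^ (n : ℤ) * y) := by rw [hconj]
    _ = x ^ (n : ℤ) * y := by group

theorem zpow_mul_zpow_pow (h : MetacyclicRelations n x y) (hn : 3 ∣ n) (a c : ℤ) {m : ℕ}
    (hm : 3 ∣ m * (m - 1)) : (x ^ a * y ^ c) ^ m = x ^ (a * m) * y ^ (c * m) := by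
  rw [zpow_mul_zpow_pow_of_conj h.conj_eq_zpow (h.commute hn)]
  obtain ⟨k, hk⟩ := Nat.dvd_choose_two_of_dvd_mul_pred (by decide) hm
  congr 1
  exact h.zpow_left_congr (Int.modEq_iff_dvd.mpr ⟨a * c * k, by rw [hk]; push_cast; ring⟩)

theorem zpow_mul_zpow_eq_one (h : MetacyclicRelations n x y) {i j : ℤ} (hi : 3 * (n : ℤ) ∣ i)
    (hj : (n : ℤ) ∣ j) : x ^ i * y ^ j = 1 := by
  rw [h.zpow_left_congr (Int.modEq_zero_iff_dvd.mpr hi),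
    h.zpow_right_congr (Int.modEq_zero_iff_dvd.mpr hj)]
  simp

theorem zpow_neg_two_mul_zpow_sub_three_mul (h : MetacyclicRelations n x y) (hn : 3 ∣ n) :
    MetacyclicRelations n (x ^ (-2 : ℤ) * y) (x ^ ((n : ℤ) - 3) * y) := by
  have hc := h.commute hn
  rw [← zpow_one y]
  constructor
  · rw [h.zpow_mul_zpow_pow hn _ _ (dvd_mul_of_dvd_left (dvd_mul_right 3 n) _)]
    exact h.zpow_mul_zpow_eq_one ⟨-2, by push_cast; ring⟩ ⟨3, by push_cast; ring⟩
  · rw [h.zpow_mul_zpow_pow hn _ _ (dvd_mul_of_dvd_left hn _)]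
    obtain ⟨k, hk⟩ : (3 : ℤ) ∣ n := Int.natCast_dvd_natCast.mpr hn
    exact h.zpow_mul_zpow_eq_one ⟨k - 1, by rw [hk]; ring⟩ ⟨1, by ring⟩
  · rw [mul_assoc, inv_mul_eq_iff_eq_mul,
      h.zpow_mul_zpow_pow hn _ _ (dvd_mul_of_dvd_right (by simpa using hn) _),
      zpow_mul_zpow_mul_zpow_mul_zpow_of_conj h.conj_eq_zpow hc,
      zpow_mul_zpow_mul_zpow_mul_zpow_of_conj h.conj_eq_zpow hc]
    congr 1
    · exact h.zpow_left_congr (Int.modEq_iff_dvd.mpr ⟨n - 1, by push_cast; ring⟩)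
    · exact h.zpow_right_congr (Int.modEq_iff_dvd.mpr ⟨1, by push_cast; ring⟩)

theorem inv_zpow_sub_three_mul_mul_zpow_neg_two_mul (h : MetacyclicRelations n x y) (hn : 3 ∣ n) :
    (x ^ ((n : ℤ) - 3) * y)⁻¹ * (x ^ (-2 : ℤ) * y) = x := by
  have hyx := zpow_mul_zpow_eq_of_conj h.conj_eq_zpow (h.commute hn) 1 1
  rw [zpow_one, zpow_one] at hyx
  rw [inv_mul_eq_iff_eq_mul, mul_assoc, hyx]
  group

open scoped Pointwise in
theorem finite (h : MetacyclicRelations n x y) (hn : 3 ∣ n) (hn0 : 0 < n)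
    (hgen : Subgroup.closure {x, y} = ⊤) : Finite G := by
  have hx : IsOfFinOrder x := isOfFinOrder_iff_pow_eq_one.mpr ⟨3 * n, by omega, h.pow_left⟩
  have hy : IsOfFinOrder y := isOfFinOrder_iff_pow_eq_one.mpr ⟨n, hn0, h.pow_right⟩
  have hcover : Set.univ ⊆ (Subgroup.zpowers x : Set G) * (Subgroup.zpowers y : Set G) := by
    intro g _
    obtain ⟨i, j, rfl⟩ := exists_zpow_mul_zpow_eq_of_mem_closure h.conj_eq_zpow (h.commute hn)
      (hgen ▸ Subgroup.mem_top g)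
    exact Set.mul_mem_mul (Subgroup.zpow_mem_zpowers x i) (Subgroup.zpow_mem_zpowers y j)
  exact Set.finite_univ_iff.mp (((finite_zpowers.mpr hx).mul (finite_zpowers.mpr hy)).subset hcover)

end MetacyclicRelations

theorem PresentedGroup.closure_of_zero_of_one (rels : Set (FreeGroup (Fin 2))) :
    Subgroup.closure {of 0, of 1} = (⊤ : Subgroup (PresentedGroup rels)) := by
  refine eq_top_iff.mpr fun g _ => generated_by rels _ (fun i => ?_) g
  fin_cases i <;> exact Subgroup.subset_closure (by simp)

theorem metacyclicRelations_iff_lift_gRels {H : Type*} [Group H] {t : ℕ} {x y : H} :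
    MetacyclicRelations (3 ^ t) x y ↔ ∀ r ∈ gRels t, FreeGroup.lift ![x, y] r = 1 := by
  refine ⟨fun h => ?_, fun h => ⟨?_, ?_, ?_⟩⟩
  · rintro r (rfl | rfl | rfl)
    · simpa [pow_succ'] using h.pow_left
    · simpa using h.pow_right
    · simpa [mul_inv_eq_one] using h.conj
  · simpa [pow_succ'] using h _ (Set.mem_insert _ _)
  · simpa using h _ (Set.mem_insert_of_mem _ (Set.mem_insert _ _))
  · simpa [mul_inv_eq_one] using h _ (Set.mem_insert_of_mem _ (Set.mem_insert_of_mem _ rfl))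

theorem metacyclicRelations_of_gRels (t : ℕ) :
    MetacyclicRelations (3 ^ t) (PresentedGroup.of 0 : PresentedGroup (gRels t))
      (PresentedGroup.of 1) := by
  have hmk : FreeGroup.lift ![PresentedGroup.of 0, PresentedGroup.of 1] =
      PresentedGroup.mk (gRels t) :=
    FreeGroup.ext_hom _ _ fun i => by fin_cases i <;> rfl
  exact metacyclicRelations_iff_lift_gRels.mpr fun r hr => hmk ▸ PresentedGroup.one_of_mem hr

theorem stmt_6 (t : ℕ) (ht : 0 < t) :
    ∃ φ : PresentedGroup (gRels t) ≃* PresentedGroup (gRels t),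
      φ (PresentedGroup.of 0) =
          (PresentedGroup.of 0 : PresentedGroup (gRels t)) ^ (-2 : ℤ) *
            PresentedGroup.of 1 ∧
      φ (PresentedGroup.of 1) =
          (PresentedGroup.of 0 : PresentedGroup (gRels t)) ^ (3 ^ t - 3) *
            PresentedGroup.of 1 := by
  set a : PresentedGroup (gRels t) := PresentedGroup.of 0
  set b : PresentedGroup (gRels t) := PresentedGroup.of 1
  have h := metacyclicRelations_of_gRels t
  have h3 : 3 ∣ 3 ^ t := dvd_pow_self 3 ht.ne'
  have hexp : a ^ (3 ^ t - 3) = a ^ (((3 ^ t : ℕ) : ℤ) - 3) := by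
    rw [← zpow_natCast, Nat.cast_sub (Nat.le_of_dvd (by positivity) h3)]
    norm_num
  have hrels :=
    metacyclicRelations_iff_lift_gRels.mp (hexp ▸ h.zpow_neg_two_mul_zpow_sub_three_mul h3)
  set Φ := PresentedGroup.toGroup hrels
  have hΦa : Φ a = a ^ (-2 : ℤ) * b := PresentedGroup.toGroup.of hrels
  have hΦb : Φ b = a ^ (3 ^ t - 3) * b := PresentedGroup.toGroup.of hrels
  have hsurj : Function.Surjective Φ := by
    refine fun g => Φ.mem_range.mp (PresentedGroup.generated_by _ _ (fun i => ?_) g)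
    have hΦ : Φ (b⁻¹ * a) = a := by
      rw [map_mul, map_inv, hΦa, hΦb, hexp, h.inv_zpow_sub_three_mul_mul_zpow_neg_two_mul h3]
    fin_cases i
    · exact ⟨b⁻¹ * a, hΦ⟩
    · exact ⟨(b⁻¹ * a) ^ 2 * a, show _ = b by rw [map_mul, map_pow, hΦ, hΦa]; group⟩
  have := h.finite h3 (by positivity) (PresentedGroup.closure_of_zero_of_one _)
  exact ⟨MulEquiv.ofBijective Φ (Finite.surjective_iff_bijective.mp hsurj), hΦa, hΦb⟩
end

section
/- Let t be a positive integer and let G = ⟨a, b | a^(3^(t+1)) = b^(3^t) = 1, b^(-1)ab = a^(1+3^t)⟩. Then the elements x = a^(-2)b and y = a^(3^t-3)b generate G; specifically, (yx^(-1))^(3^t+1) = a^(-1) and ((yx^(-1))^(3^t+1))^(-2) · x = b. -/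
theorem stmt_7 (t : ℕ) (ht : 0 < t) {G : Type*} [Group G] (a b : G)
    (ha : a ^ 3 ^ (t + 1) = 1) (hb : b ^ 3 ^ t = 1)
    (hrel : b⁻¹ * a * b = a ^ (1 + 3 ^ t))
    (hgen : Subgroup.closure ({a, b} : Set G) = ⊤) :
    Subgroup.closure ({a ^ (-2 : ℤ) * b, a ^ (3 ^ t - 3) * b} : Set G) = ⊤ ∧
    ((a ^ (3 ^ t - 3) * b) * (a ^ (-2 : ℤ) * b)⁻¹) ^ (3 ^ t + 1) = a⁻¹ ∧
    (((a ^ (3 ^ t - 3) * b) * (a ^ (-2 : ℤ) * b)⁻¹) ^ (3 ^ t + 1)) ^ (-2 : ℤ) *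
        (a ^ (-2 : ℤ) * b) = b := by
  have h3 : 3 ≤ 3 ^ t := by
    calc 3 = 3 ^ 1 := (pow_one 3).symm
    _ ≤ 3 ^ t := Nat.pow_le_pow_right (by norm_num) ht
  -- y * x⁻¹ = a ^ (3^t - 1)
  have hc : (a ^ (3 ^ t - 3) * b) * (a ^ (-2 : ℤ) * b)⁻¹ = a ^ (3 ^ t - 1) := by
    have he : 3 ^ t - 1 = (3 ^ t - 3) + 2 := by omega
    rw [he]
    generalize (3 ^ t - 3) = n
    rw [pow_add]
    group
  -- a ^ (3 ^ (2*t)) = 1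
  have hz : a ^ 3 ^ (2 * t) = 1 := by
    have hsplit : 3 ^ (2 * t) = 3 ^ (t + 1) * 3 ^ (2 * t - (t + 1)) := by
      rw [← pow_add]
      congr 1
      omega
    rw [hsplit, pow_mul, ha, one_pow]
  have hkey : ((a ^ (3 ^ t - 3) * b) * (a ^ (-2 : ℤ) * b)⁻¹) ^ (3 ^ t + 1) = a⁻¹ := by
    rw [hc, ← pow_mul]
    have hmul : (3 ^ t - 1) * (3 ^ t + 1) = 3 ^ (2 * t) - 1 := by
      have h2 : 3 ^ (2 * t) = 3 ^ t * 3 ^ t := by rw [two_mul, pow_add]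
      have h1 : 1 ≤ 3 ^ t := Nat.one_le_pow t 3 (by norm_num)
      have h1' : 1 ≤ 3 ^ t * 3 ^ t := Nat.mul_le_mul h1 h1
      rw [h2]
      zify [h1, h1']
      ring
    rw [hmul]
    have hstep : a ^ (3 ^ (2 * t) - 1) * a = 1 := by
      rw [← pow_succ]
      have : 3 ^ (2 * t) - 1 + 1 = 3 ^ (2 * t) := by
        have := Nat.one_le_pow (2 * t) 3 (by norm_num)
        omega
      rw [this, hz]
    exact eq_inv_of_mul_eq_one_left hstep
  have hlast : (((a ^ (3 ^ t - 3) * b) * (a ^ (-2 : ℤ) * b)⁻¹) ^ (3 ^ t + 1)) ^ (-2 : ℤ) *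
      (a ^ (-2 : ℤ) * b) = b := by
    rw [hkey]
    group
  refine ⟨?_, hkey, hlast⟩
  rw [eq_top_iff, ← hgen, Subgroup.closure_le]
  set H := Subgroup.closure ({a ^ (-2 : ℤ) * b, a ^ (3 ^ t - 3) * b} : Set G) with hH
  have hx : a ^ (-2 : ℤ) * b ∈ H := Subgroup.subset_closure (by simp)
  have hy : a ^ (3 ^ t - 3) * b ∈ H := Subgroup.subset_closure (by simp)
  have hainv : a⁻¹ ∈ H := by
    rw [← hkey]
    exact pow_mem (mul_mem hy (inv_mem hx)) _
  have haH : a ∈ H := (inv_mem_iff).1 hainv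
  have hbH : b ∈ H := by
    have : a ^ (2 : ℤ) * (a ^ (-2 : ℤ) * b) = b := by group
    rw [← this]
    exact mul_mem (zpow_mem haH 2) hx
  intro g hg
  rcases hg with rfl | rfl
  · exact haH
  · exact hbH
end

section
/- Let t be a positive integer and let G = ⟨a, b | a^(3^(t+1)) = b^(3^t) = 1, b^(-1)ab = a^(1+3^t)⟩. Then there is no automorphism of G mapping a to a^(-1) and b to a^(3t)b^(-1). -/
theorem pow_mul_self_eq_self_of_conj_eq_pow {G : Type*} [Group G] {a b : G} {k : ℕ}
    (h₁ : b⁻¹ * a * b = a ^ k) (h₂ : b * a * b⁻¹ = a ^ k) : a ^ (k * k) = a :=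
  calc a ^ (k * k) = (b⁻¹ * a * b⁻¹⁻¹) ^ k := by rw [inv_inv, h₁, pow_mul]
    _ = b⁻¹ * a ^ k * b := by rw [conj_pow, inv_inv]
    _ = a := by rw [← h₂]; group

theorem not_one_add_three_pow_mul_self_modEq_one {t : ℕ} (ht : 0 < t) :
    ¬ (1 + 3 ^ t) * (1 + 3 ^ t) ≡ 1 [MOD 3 ^ (t + 1)] := by
  intro h
  have hdvd : 3 ^ t * 3 ∣ 3 ^ t * (2 + 3 ^ t) := by
    rw [← pow_succ]
    have hle : 1 ≤ (1 + 3 ^ t) * (1 + 3 ^ t) := Nat.one_le_iff_ne_zero.2 (by positivity)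
    refine ((Nat.modEq_iff_dvd' hle).1 h.symm).trans (dvd_of_eq ?_)
    rw [Nat.sub_eq_of_eq_add]; ring
  have h3 : 3 ∣ 2 + 3 ^ t := Nat.dvd_of_mul_dvd_mul_left (by positivity) hdvd
  have : 3 ∣ 2 := (Nat.dvd_add_left (dvd_pow_self 3 ht.ne')).1 h3
  omega

section AffinePerm

variable {R : Type*} [Ring R]

theorem Equiv.addLeft_one_pow (n : ℕ) : Equiv.addLeft (1 : R) ^ n = Equiv.addLeft (n : R) := by
  ext y; simp

theorem MulAction.toPerm_inv_conj_addLeft (u : Rˣ) (c : R) :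
    (MulAction.toPerm u⁻¹ : Equiv.Perm R)⁻¹ * Equiv.addLeft c * MulAction.toPerm u⁻¹ =
      Equiv.addLeft (u * c) := by
  ext y; simp [Units.smul_def]

end AffinePerm

theorem one_add_pow_pow_pow_eq_one {p t : ℕ} (ht : 0 < t) :
    (1 + p ^ t : ZMod (p ^ (t + 1))) ^ p ^ t = 1 := by
  have hsq : ((p ^ t : ℕ) : ZMod (p ^ (t + 1))) ^ 2 = 0 := by
    rw [← Nat.cast_pow, ZMod.natCast_eq_zero_iff, ← pow_mul]
    exact pow_dvd_pow p (by omega)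
  have := dvd_sub_pow_of_dvd_sub (R := ZMod (p ^ (t + 1))) (p := p ^ t)
    (a := 1 + p ^ t) (b := 1) (by simp) 1
  rw [hsq, zero_dvd_iff, sub_eq_zero, one_pow] at this
  simpa using this

namespace gRels

variable (t : ℕ)

local notation "a" => (PresentedGroup.of 0 : PresentedGroup (gRels t))
local notation "b" => (PresentedGroup.of 1 : PresentedGroup (gRels t))

theorem of_zero_pow : a ^ 3 ^ (t + 1) = 1 := by
  have := PresentedGroup.one_of_mem (rels := gRels t) (Or.inl rfl)
  rwa [map_pow] at this

theorem conj_of_zero : b⁻¹ * a * b = a ^ (1 + 3 ^ t) := by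
  have := PresentedGroup.one_of_mem (rels := gRels t) (Or.inr (Or.inr rfl))
  simp only [map_mul, map_inv, map_pow] at this
  exact mul_inv_eq_one.1 this

variable {t}

noncomputable def affineUnit (ht : 0 < t) : (ZMod (3 ^ (t + 1)))ˣ :=
  Units.ofPowEqOne _ _ (one_add_pow_pow_pow_eq_one ht) (by positivity)

noncomputable def affineRep (ht : 0 < t) :
    PresentedGroup (gRels t) →* Equiv.Perm (ZMod (3 ^ (t + 1))) :=
  PresentedGroup.toGroup (f := ![Equiv.addLeft 1, MulAction.toPerm (affineUnit ht)⁻¹]) <| by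
    rintro r (rfl | rfl | rfl) <;>
      simp only [map_mul, map_inv, map_pow, FreeGroup.lift_apply_of, Matrix.cons_val_zero,
        Matrix.cons_val_one]
    · rw [Equiv.addLeft_one_pow, ZMod.natCast_self, Equiv.addLeft_zero]
    · change MulAction.toPermHom _ _ _ ^ _ = _
      rw [← map_pow, inv_pow, affineUnit, Units.pow_ofPowEqOne, inv_one, map_one]
    · rw [mul_inv_eq_one, MulAction.toPerm_inv_conj_addLeft, Equiv.addLeft_one_pow, mul_one]
      simp [affineUnit]

theorem affineRep_of_zero (ht : 0 < t) : affineRep ht a = Equiv.addLeft 1 :=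
  PresentedGroup.toGroup.of _

theorem orderOf_of_zero (ht : 0 < t) : orderOf a = 3 ^ (t + 1) := by
  refine orderOf_eq_prime_pow (fun h => ?_) (of_zero_pow t)
  have h' := congrArg (affineRep ht) h
  rw [map_pow, affineRep_of_zero, Equiv.addLeft_one_pow, map_one] at h'
  have h0 : ((3 ^ t : ℕ) : ZMod (3 ^ (t + 1))) = 0 := by
    simpa only [Equiv.coe_addLeft, add_zero, Equiv.Perm.one_apply] using DFunLike.congr_fun h' 0
  rw [ZMod.natCast_eq_zero_iff, Nat.pow_dvd_pow_iff_le_right (by norm_num)] at h0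
  omega

end gRels

theorem stmt_8 (t : ℕ) (ht : 0 < t) :
    ¬ ∃ φ : PresentedGroup (gRels t) ≃* PresentedGroup (gRels t),
      φ (PresentedGroup.of 0) = (PresentedGroup.of 0 : PresentedGroup (gRels t))⁻¹ ∧
      φ (PresentedGroup.of 1) =
        (PresentedGroup.of 0 : PresentedGroup (gRels t)) ^ (3 * t) *
          (PresentedGroup.of 1 : PresentedGroup (gRels t))⁻¹ := by
  rintro ⟨φ, hφa, hφb⟩
  set a : PresentedGroup (gRels t) := PresentedGroup.of 0
  set b : PresentedGroup (gRels t) := PresentedGroup.of 1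
  have hconj : b⁻¹ * a * b = a ^ (1 + 3 ^ t) := gRels.conj_of_zero t
  have hconj' : b * a * b⁻¹ = a ^ (1 + 3 ^ t) := by
    have h := congrArg φ hconj
    rw [map_mul, map_mul, map_inv, map_pow, hφa, hφb, inv_pow] at h
    rw [← inv_inj, ← h]
    group
  have hsq := (pow_mul_self_eq_self_of_conj_eq_pow hconj hconj').trans (pow_one a).symm
  rw [pow_eq_pow_iff_modEq, gRels.orderOf_of_zero ht] at hsq
  exact not_one_add_three_pow_mul_self_modEq_one ht hsq
end

section
/- Let t be a positive integer and let G = ⟨a, b | a^(3^(t+1)) = b^(3^t) = 1, b^(-1)ab = a^(1+3^t)⟩. Then there is no automorphism of G mapping a to b^(-1)a and b to b^(-1). -/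
namespace Stmt9Aux

variable (t : ℕ)

/-- `p = 3^t` in `ZMod (3^(t+1))`. -/
noncomputable def p : ZMod (3 ^ (t + 1)) := (3 : ZMod (3 ^ (t + 1))) ^ t

lemma three_pow_succ : (3 : ZMod (3 ^ (t + 1))) ^ (t + 1) = 0 := by
  have : ((3 ^ (t + 1) : ℕ) : ZMod (3 ^ (t + 1))) = 0 := ZMod.natCast_self _
  push_cast at this
  exact this

lemma p_mul_p (ht : 0 < t) : p t * p t = 0 := by
  have h : t + t = (t + 1) + (t - 1) := by omega
  have h2 : (3 : ZMod (3 ^ (t + 1))) ^ (t + t) = 3 ^ (t + 1) * 3 ^ (t - 1) := by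
    rw [h]; exact pow_add 3 (t + 1) (t - 1)
  rw [p, ← pow_add, h2, three_pow_succ, zero_mul]

/-- `u = 1 + 3^t`. -/
noncomputable def u : ZMod (3 ^ (t + 1)) := 1 + p t

/-- `w = 1 - 3^t`, the inverse of `u`. -/
noncomputable def w : ZMod (3 ^ (t + 1)) := 1 - p t

lemma u_mul_w (ht : 0 < t) : u t * w t = 1 := by
  have hpp := p_mul_p t ht
  rw [u, w]
  linear_combination -hpp

lemma w_mul_u (ht : 0 < t) : w t * u t = 1 := by
  rw [mul_comm]; exact u_mul_w t ht

/-- The permutation `x ↦ 1 + x` of `ZMod (3^(t+1))`, image of `a`. -/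
noncomputable def A : Equiv.Perm (ZMod (3 ^ (t + 1))) := Equiv.addLeft 1

/-- The permutation `x ↦ w * x` of `ZMod (3^(t+1))`, image of `b`. -/
noncomputable def B (ht : 0 < t) : Equiv.Perm (ZMod (3 ^ (t + 1))) where
  toFun x := w t * x
  invFun x := u t * x
  left_inv x := by
    show u t * (w t * x) = x
    rw [← mul_assoc, u_mul_w t ht, one_mul]
  right_inv x := by
    show w t * (u t * x) = x
    rw [← mul_assoc, w_mul_u t ht, one_mul]

lemma A_pow_apply (n : ℕ) (x : ZMod (3 ^ (t + 1))) :
    (A t ^ n) x = (n : ZMod (3 ^ (t + 1))) + x := by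
  induction n generalizing x with
  | zero => simp
  | succ k ih =>
    rw [pow_succ (A t) k, Equiv.Perm.mul_apply, ih]
    show (k : ZMod (3 ^ (t + 1))) + (1 + x) = _
    push_cast
    ring

lemma B_pow_apply (ht : 0 < t) (n : ℕ) (x : ZMod (3 ^ (t + 1))) :
    (B t ht ^ n) x = w t ^ n * x := by
  induction n generalizing x with
  | zero => simp
  | succ k ih =>
    rw [pow_succ (B t ht) k, Equiv.Perm.mul_apply]
    show (B t ht ^ k) (w t * x) = _
    rw [ih]; ring

lemma B_inv_apply (ht : 0 < t) (x : ZMod (3 ^ (t + 1))) : (B t ht)⁻¹ x = u t * x := rfl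

lemma w_cube (ht : 0 < t) : w t ^ 3 = 1 := by
  have hpp := p_mul_p t ht
  have h3p : (3 : ZMod (3 ^ (t + 1))) * p t = 0 := by
    have : (3 : ZMod (3 ^ (t + 1))) * p t = 3 ^ (t + 1) := by rw [p, pow_succ]; ring
    rw [this, three_pow_succ]
  have : w t ^ 3 = 1 - 3 * p t + 3 * (p t * p t) - p t * (p t * p t) := by rw [w]; ring
  rw [this, hpp, h3p]; ring

lemma u_cube (ht : 0 < t) : u t ^ 3 = 1 := by
  have hpp := p_mul_p t ht
  have h3p : (3 : ZMod (3 ^ (t + 1))) * p t = 0 := by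
    have : (3 : ZMod (3 ^ (t + 1))) * p t = 3 ^ (t + 1) := by rw [p, pow_succ]; ring
    rw [this, three_pow_succ]
  have : u t ^ 3 = 1 + 3 * p t + 3 * (p t * p t) + p t * (p t * p t) := by rw [u]; ring
  rw [this, hpp, h3p]; ring

lemma w_pow_3t (ht : 0 < t) : w t ^ 3 ^ t = 1 := by
  have h : 3 ^ t = 3 * 3 ^ (t - 1) := by
    rw [← pow_succ']
    congr 1
    omega
  rw [h, pow_mul, w_cube t ht, one_pow]

/-- Relation 1: `A ^ 3^(t+1) = 1`. -/
lemma relA (ht : 0 < t) : A t ^ 3 ^ (t + 1) = 1 := by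
  ext x
  rw [A_pow_apply]
  simp [ZMod.natCast_self]

/-- Relation 2: `B ^ 3^t = 1`. -/
lemma relB (ht : 0 < t) : B t ht ^ 3 ^ t = 1 := by
  ext x
  rw [B_pow_apply t ht, w_pow_3t t ht]
  simp

/-- Relation 3: `B⁻¹ * A * B = A ^ (1 + 3^t)`. -/
lemma relC (ht : 0 < t) : (B t ht)⁻¹ * A t * B t ht = A t ^ (1 + 3 ^ t) := by
  ext x
  rw [Equiv.Perm.mul_apply, Equiv.Perm.mul_apply, A_pow_apply]
  show u t * (A t (w t * x)) = _
  show u t * (1 + w t * x) = _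
  have hcast : ((1 + 3 ^ t : ℕ) : ZMod (3 ^ (t + 1))) = u t := by
    rw [u, p]; push_cast; ring
  rw [hcast, mul_add, mul_one, ← mul_assoc, u_mul_w t ht, one_mul, u]

/-- The key inequality: `A * B⁻¹ ≠ (B⁻¹ * A) ^ (1 + 3^t)`. -/
lemma key (ht : 0 < t) : A t * (B t ht)⁻¹ ≠ ((B t ht)⁻¹ * A t) ^ (1 + 3 ^ t) := by
  intro h
  -- evaluate both sides at 0
  have hL : (A t * (B t ht)⁻¹) 0 = 1 := by
    rw [Equiv.Perm.mul_apply, B_inv_apply, mul_zero]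
    show (1 : ZMod (3 ^ (t + 1))) + 0 = 1
    ring
  -- C := B⁻¹ * A satisfies C^3 = A^3
  set C := (B t ht)⁻¹ * A t with hC
  have hCapp : ∀ x : ZMod (3 ^ (t + 1)), C x = u t + u t * x := by
    intro x
    rw [hC, Equiv.Perm.mul_apply, B_inv_apply]
    show u t * (1 + x) = _
    ring
  have hC3 : C ^ 3 = A t ^ 3 := by
    ext x
    have hsplit : C ^ 3 = C * C * C := pow_three C
    have h1 : (C ^ 3) x = C (C (C x)) := by
      rw [hsplit, Equiv.Perm.mul_apply, Equiv.Perm.mul_apply]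
    rw [h1, hCapp, hCapp, hCapp, A_pow_apply]
    have hu3 := u_cube t ht
    have : u t + u t * (u t + u t * (u t + u t * x)) =
        (u t + u t ^ 2 + u t ^ 3) + u t ^ 3 * x := by ring
    rw [this, hu3]
    have husum : u t + u t ^ 2 + 1 = 3 := by
      have hpp := p_mul_p t ht
      have h3p : (3 : ZMod (3 ^ (t + 1))) * p t = 0 := by
        have : (3 : ZMod (3 ^ (t + 1))) * p t = 3 ^ (t + 1) := by rw [p, pow_succ]; ring
        rw [this, three_pow_succ]
      have : u t + u t ^ 2 + 1 = 3 + 3 * p t + p t * p t := by rw [u]; ring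
      rw [this, hpp, h3p]; ring
    rw [husum]
    push_cast
    ring
  have hC3t : C ^ 3 ^ t = A t ^ 3 ^ t := by
    have h : 3 ^ t = 3 * 3 ^ (t - 1) := by
      rw [← pow_succ']; congr 1; omega
    rw [h, pow_mul, pow_mul, hC3]
  have hR : (C ^ (1 + 3 ^ t)) 0 = 1 + 2 * p t := by
    have hsplit : C ^ (1 + 3 ^ t) = C ^ 3 ^ t * C := by
      rw [add_comm 1 (3 ^ t)]
      rw [pow_add C (3 ^ t) 1, pow_one]
    rw [hsplit, Equiv.Perm.mul_apply, hCapp, mul_zero, add_zero, hC3t, A_pow_apply]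
    rw [u, p]
    push_cast
    ring
  rw [h, hR] at hL
  have h2p : (2 * p t : ZMod (3 ^ (t + 1))) = 0 := by
    linear_combination hL
  have : ((2 * 3 ^ t : ℕ) : ZMod (3 ^ (t + 1))) = 0 := by
    push_cast
    exact h2p
  rw [ZMod.natCast_eq_zero_iff] at this
  have h3 : 3 ^ (t + 1) ∣ 2 * 3 ^ t := this
  have : ¬ (3 ^ (t + 1) ∣ 2 * 3 ^ t) := by
    intro hd
    have := Nat.le_of_dvd (by positivity) hd
    have h1 : 3 ^ (t + 1) = 3 * 3 ^ t := by rw [pow_succ]; ring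
    omega
  exact this h3

end Stmt9Aux

theorem stmt_9 (t : ℕ) (ht : 0 < t) :
    ¬ ∃ φ : PresentedGroup (gRels t) ≃* PresentedGroup (gRels t),
      φ (PresentedGroup.of 0) =
        (PresentedGroup.of 1 : PresentedGroup (gRels t))⁻¹ * PresentedGroup.of 0 ∧
      φ (PresentedGroup.of 1) =
        (PresentedGroup.of 1 : PresentedGroup (gRels t))⁻¹ := by
  rintro ⟨φ, ha, hb⟩
  -- In the presented group, the third relation holds.
  set a : PresentedGroup (gRels t) := PresentedGroup.of 0 with ha'
  set b : PresentedGroup (gRels t) := PresentedGroup.of 1 with hb'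
  have hrel : b⁻¹ * a * b = a ^ (1 + 3 ^ t) := by
    have hmem : ((FreeGroup.of 1)⁻¹ * FreeGroup.of 0 * FreeGroup.of 1 *
        ((FreeGroup.of 0 : FreeGroup (Fin 2)) ^ (1 + 3 ^ t))⁻¹) ∈ gRels t := by
      simp [gRels]
    have h1 : PresentedGroup.mk (gRels t) ((FreeGroup.of 1)⁻¹ * FreeGroup.of 0 * FreeGroup.of 1 *
        ((FreeGroup.of 0 : FreeGroup (Fin 2)) ^ (1 + 3 ^ t))⁻¹) = 1 := by
      have : ((FreeGroup.of 1)⁻¹ * FreeGroup.of 0 * FreeGroup.of 1 *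
          ((FreeGroup.of 0 : FreeGroup (Fin 2)) ^ (1 + 3 ^ t))⁻¹) ∈
          Subgroup.normalClosure (gRels t) :=
        Subgroup.subset_normalClosure hmem
      exact (QuotientGroup.eq_one_iff _).mpr this
    rw [map_mul, map_mul, map_mul, map_inv, map_inv, map_pow] at h1
    have h2 : b⁻¹ * a * b * (a ^ (1 + 3 ^ t))⁻¹ = 1 := h1
    exact mul_inv_eq_one.mp h2
  -- Apply φ to the relation.
  have hrel2 : a * b⁻¹ = (b⁻¹ * a) ^ (1 + 3 ^ t) := by
    have := congrArg φ hrel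
    rw [map_mul, map_mul, map_inv, map_pow, ha, hb] at this
    -- this : (b⁻¹)⁻¹ * (b⁻¹ * a) * b⁻¹ = (b⁻¹ * a) ^ (1 + 3 ^ t)
    rw [inv_inv] at this
    rw [← this]
    group
  -- Map to the concrete permutation group.
  classical
  let f : Fin 2 → Equiv.Perm (ZMod (3 ^ (t + 1))) := ![Stmt9Aux.A t, Stmt9Aux.B t ht]
  have hrels : ∀ r ∈ gRels t, FreeGroup.lift f r = 1 := by
    intro r hr
    rcases hr with h | h | h
    · subst h
      rw [map_pow, FreeGroup.lift_apply_of]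
      exact Stmt9Aux.relA t ht
    · subst h
      rw [map_pow, FreeGroup.lift_apply_of]
      exact Stmt9Aux.relB t ht
    · rw [Set.mem_singleton_iff] at h
      subst h
      rw [map_mul, map_mul, map_mul, map_inv, map_inv, map_pow, FreeGroup.lift_apply_of,
        FreeGroup.lift_apply_of]
      show (Stmt9Aux.B t ht)⁻¹ * Stmt9Aux.A t * Stmt9Aux.B t ht *
        (Stmt9Aux.A t ^ (1 + 3 ^ t))⁻¹ = 1
      rw [Stmt9Aux.relC t ht]
      group
  let F : PresentedGroup (gRels t) →* Equiv.Perm (ZMod (3 ^ (t + 1))) :=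
    PresentedGroup.toGroup hrels
  have hFa : F a = Stmt9Aux.A t := PresentedGroup.toGroup.of hrels
  have hFb : F b = Stmt9Aux.B t ht := PresentedGroup.toGroup.of hrels
  have := congrArg F hrel2
  rw [map_mul, map_inv, map_pow, map_mul, map_inv, hFa, hFb] at this
  exact Stmt9Aux.key t ht this
end

section
/- Let t be a positive integer and let H = ⟨a, b | a^(3^(t+1)) = b^(3^(t+1)) = 1, b^(-1)ab = a^(1+3^t)⟩. Set x = a^(2·3^t+1)b^(-3) and y = a^(2·3^t+1)b^(-2). Then y^(-1)xy = x^(3^t+1). -/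
theorem stmt_12 (t : ℕ) (ht : 0 < t) {H : Type*} [Group H] (a b : H)
    (ha : a ^ 3 ^ (t + 1) = 1) (hb : b ^ 3 ^ (t + 1) = 1)
    (hrel : b⁻¹ * a * b = a ^ (1 + 3 ^ t)) :
    (a ^ (2 * 3 ^ t + 1) * b ^ (-2 : ℤ))⁻¹ *
        (a ^ (2 * 3 ^ t + 1) * b ^ (-3 : ℤ)) *
        (a ^ (2 * 3 ^ t + 1) * b ^ (-2 : ℤ)) =
      (a ^ (2 * 3 ^ t + 1) * b ^ (-3 : ℤ)) ^ (3 ^ t + 1) := by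
  obtain ⟨s, rfl⟩ : ∃ s, t = s + 1 := ⟨t - 1, (Nat.succ_pred_eq_of_pos ht).symm⟩
  clear ht
  -- conjugation by b
  have hc : ∀ m : ℕ, b⁻¹ * a ^ m * b = a ^ ((1 + 3 ^ (s + 1)) * m) := by
    intro m
    induction m with
    | zero => simp
    | succ k ih =>
      have : b⁻¹ * a ^ (k + 1) * b = (b⁻¹ * a ^ k * b) * (b⁻¹ * a * b) := by group
      rw [this, ih, hrel, ← pow_add]
      ring_nf
  -- reduction of exponents for a
  have hred : ∀ c : ℕ, a ^ (1 + 3 ^ (s + 1 + 1) * c) = a := by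
    intro c
    rw [pow_add, pow_mul, ha, one_pow, pow_one, mul_one]
  have hzb2 : b ^ (-2 : ℤ) = (b ^ (2 : ℕ))⁻¹ := by
    rw [show (-2 : ℤ) = -((2:ℕ) : ℤ) by norm_num, zpow_neg, zpow_natCast]
  have hzb3 : b ^ (-3 : ℤ) = (b ^ (3 : ℕ))⁻¹ := by
    rw [show (-3 : ℤ) = -((3:ℕ) : ℤ) by norm_num, zpow_neg, zpow_natCast]
  -- a commutes with b^3
  have eA : (1 + 3 ^ (s+1)) * ((1 + 3 ^ (s+1)) * ((1 + 3 ^ (s+1)) * 1))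
      = 1 + 3 ^ (s + 1 + 1) * (1 + 3 ^ (s+1) + 3 ^ s * 3 ^ s * 3) := by ring
  have e0 : b⁻¹ * a * b = a ^ ((1 + 3 ^ (s+1)) * 1) := by simpa using hc 1
  have e1 : b⁻¹ * (b⁻¹ * a * b) * b = a ^ ((1 + 3 ^ (s+1)) * ((1 + 3 ^ (s+1)) * 1)) := by
    rw [e0, hc]
  have e2 : b⁻¹ * (b⁻¹ * (b⁻¹ * a * b) * b) * b = a := by
    rw [e1, hc, eA, hred]
  have h3 : a * b ^ 3 = b ^ 3 * a := by
    have h : b ^ 3 * (b⁻¹ * (b⁻¹ * (b⁻¹ * a * b) * b) * b) = b ^ 3 * a := by rw [e2]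
    calc a * b ^ 3 = b ^ 3 * (b⁻¹ * (b⁻¹ * (b⁻¹ * a * b) * b) * b) := by
          simp [pow_succ, mul_assoc]
      _ = b ^ 3 * a := h
  have hco : Commute a (b ^ 3) := h3
  have hcomm : Commute (a ^ (2 * 3 ^ (s+1) + 1)) ((b ^ 3)⁻¹) :=
    (hco.pow_left _).inv_right
  -- key exponent identities
  have eB : (1 + 3 ^ (s+1)) * (2 * 3 ^ (s+1) + 1)
      = 1 + 3 ^ (s + 1 + 1) * (1 + 2 * 3 ^ s) := by ring
  have eC : (2 * 3 ^ (s+1) + 1) * (3 ^ (s+1) + 1)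
      = 1 + 3 ^ (s + 1 + 1) * (1 + 2 * 3 ^ s) := by ring
  rw [hzb2, hzb3]
  -- LHS
  have hL : (a ^ (2 * 3 ^ (s+1) + 1) * (b ^ (2:ℕ))⁻¹)⁻¹ *
      (a ^ (2 * 3 ^ (s+1) + 1) * (b ^ (3:ℕ))⁻¹) *
      (a ^ (2 * 3 ^ (s+1) + 1) * (b ^ (2:ℕ))⁻¹)
      = (b⁻¹ * a ^ (2 * 3 ^ (s+1) + 1) * b) * (b ^ (3:ℕ))⁻¹ := by group
  rw [hL, hc, eB, hred]
  -- RHS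
  rw [hcomm.mul_pow, ← pow_mul, eC, hred, inv_pow, ← pow_mul]
  have : b ^ (3 * (3 ^ (s+1) + 1)) = b ^ 3 := by
    rw [show 3 * (3 ^ (s+1) + 1) = 3 ^ (s+1+1) + 3 by ring, pow_add, hb, one_mul]
  rw [this]
end

section
/- Let t be a positive integer and let G = ⟨a, b | a^(3^(t+1)) = b^(3^t) = 1, b^(-1)ab = a^(1+3^t)⟩. Set x = a^(-2)b and y = a^(3^t-3)b. Then x^(3^(t+1)) = 1, y^(3^t) = 1, and y^(-1)xy = x^(1+3^t). -/
/-!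
Write `p = 3 ^ t`, so that `a` has order dividing `3 * p` and conjugation by `b` multiplies
exponents of `a` by `r = 1 + p`. As `3 * r ≡ 3` modulo `3 * p`, the power `a ^ 3` is central, and
as `r + r ^ 2 + r ^ 3 ≡ 3`, one gets `(a ^ v * b) ^ 3 = b ^ 3 * a ^ (3 * v)`, hence
`(a ^ v * b) ^ p = a ^ (v * p)` for every `v`. With this, each of the three relations for
`x = a ^ (-2) * b` and `y = a ^ (p - 3) * b` becomes a congruence of exponents modulo `3 * p`.
-/

open Finset

section Conjugation

variable {G : Type*} [Group G] {a b : G}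

theorem zpow_eq_zpow_of_modEq {n k l : ℤ} (ha : a ^ n = 1) (h : k ≡ l [ZMOD n]) :
    a ^ k = a ^ l := by
  rw [zpow_eq_zpow_emod k ha, h, ← zpow_eq_zpow_emod l ha]

theorem inv_mul_zpow_mul_of_inv_mul_mul_eq {r : ℤ} (h : b⁻¹ * a * b = a ^ r) (k : ℤ) :
    b⁻¹ * a ^ k * b = a ^ (r * k) := by
  simpa only [inv_inv, ← h, zpow_mul] using (conj_zpow (a := b⁻¹) (b := a) (i := k)).symm

theorem zpow_mul_eq_mul_zpow_of_inv_mul_mul_eq {r : ℤ} (h : b⁻¹ * a * b = a ^ r) (k : ℤ) :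
    a ^ k * b = b * a ^ (r * k) := by
  rw [← inv_mul_zpow_mul_of_inv_mul_mul_eq h]
  group

theorem mul_zpow_pow_of_inv_mul_mul_eq {r : ℤ} (h : b⁻¹ * a * b = a ^ r) (w : ℤ) (n : ℕ) :
    (b * a ^ w) ^ n = b ^ n * a ^ (w * ∑ i ∈ range n, r ^ i) := by
  induction n with
  | zero => simp
  | succ n ih =>
    rw [pow_succ, ih, mul_assoc, ← mul_assoc (a ^ _), zpow_mul_eq_mul_zpow_of_inv_mul_mul_eq h,
      mul_assoc b, ← zpow_add, ← mul_assoc, ← pow_succ, geom_sum_succ]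
    ring_nf

end Conjugation

namespace Metacyclic

variable {G : Type*} [Group G] {a b : G} {p : ℕ}

theorem commute_pow_three (ha : a ^ (3 * p) = 1) (hrel : b⁻¹ * a * b = a ^ (1 + p)) :
    Commute (a ^ 3) b := by
  have hrel' : b⁻¹ * a * b = a ^ (1 + p : ℤ) := by exact_mod_cast hrel
  have hconj := inv_mul_zpow_mul_of_inv_mul_mul_eq hrel' 3
  rw [show (1 + p : ℤ) * 3 = 3 + ((3 * p : ℕ) : ℤ) by push_cast; ring, zpow_add, zpow_natCast,
    ha, mul_one, mul_assoc, inv_mul_eq_iff_eq_mul] at hconj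
  exact_mod_cast hconj

theorem zpow_mul_pow_three (hp : 3 ∣ p) (ha : a ^ (3 * p) = 1)
    (hrel : b⁻¹ * a * b = a ^ (1 + p)) (v : ℤ) :
    (a ^ v * b) ^ 3 = b ^ 3 * a ^ (3 * v) := by
  have hrel' : b⁻¹ * a * b = a ^ (1 + p : ℤ) := by exact_mod_cast hrel
  rw [zpow_mul_eq_mul_zpow_of_inv_mul_mul_eq hrel', mul_zpow_pow_of_inv_mul_mul_eq hrel']
  congr 1
  refine zpow_eq_zpow_of_modEq (n := 3 * p) (by exact_mod_cast ha) ?_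
  obtain ⟨q, rfl⟩ := hp
  simp only [sum_range_succ, sum_range_zero]
  refine Int.modEq_iff_dvd.2 ⟨-v * (2 + 4 * q + 3 * q ^ 2), ?_⟩
  push_cast
  ring

theorem commute_zpow_of_three_dvd (ha : a ^ (3 * p) = 1) (hrel : b⁻¹ * a * b = a ^ (1 + p))
    {k : ℤ} (hk : 3 ∣ k) : Commute (a ^ k) b := by
  obtain ⟨c, rfl⟩ := hk
  rw [zpow_mul]
  exact_mod_cast (commute_pow_three ha hrel).zpow_left c

theorem zpow_mul_pow_three_mul (hp : 3 ∣ p) (ha : a ^ (3 * p) = 1)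
    (hrel : b⁻¹ * a * b = a ^ (1 + p)) (v : ℤ) (m : ℕ) :
    (a ^ v * b) ^ (3 * m) = b ^ (3 * m) * a ^ (3 * v * m) := by
  have hcomm : Commute (b ^ 3) (a ^ (3 * v)) :=
    ((commute_zpow_of_three_dvd ha hrel (dvd_mul_right 3 v)).pow_right 3).symm
  rw [pow_mul, zpow_mul_pow_three hp ha hrel, hcomm.mul_pow, ← pow_mul, zpow_mul a _ m,
    zpow_natCast]

theorem zpow_mul_pow_eq_zpow (hp : 3 ∣ p) (ha : a ^ (3 * p) = 1)
    (hrel : b⁻¹ * a * b = a ^ (1 + p)) (hb : b ^ p = 1) (v : ℤ) :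
    (a ^ v * b) ^ p = a ^ (v * p) := by
  obtain ⟨q, rfl⟩ := hp
  rw [zpow_mul_pow_three_mul ⟨q, rfl⟩ ha hrel, hb, one_mul]
  congr 1
  push_cast
  ring

theorem zpow_mul_pow_three_mul_eq_one (hp : 3 ∣ p) (ha : a ^ (3 * p) = 1)
    (hrel : b⁻¹ * a * b = a ^ (1 + p)) (hb : b ^ p = 1) (v : ℤ) :
    (a ^ v * b) ^ (3 * p) = 1 := by
  have ha' : a ^ (3 * p : ℤ) = 1 := by exact_mod_cast ha
  rw [pow_mul', zpow_mul_pow_eq_zpow hp ha hrel hb, ← zpow_natCast, ← zpow_mul,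
    show v * p * (3 : ℕ) = 3 * p * v by push_cast; ring, zpow_mul, ha', one_zpow]

theorem zpow_mul_pow_eq_one_of_three_dvd (hp : 3 ∣ p) (ha : a ^ (3 * p) = 1)
    (hrel : b⁻¹ * a * b = a ^ (1 + p)) (hb : b ^ p = 1) {v : ℤ} (hv : 3 ∣ v) :
    (a ^ v * b) ^ p = 1 := by
  have ha' : a ^ (3 * p : ℤ) = 1 := by exact_mod_cast ha
  obtain ⟨c, rfl⟩ := hv
  rw [zpow_mul_pow_eq_zpow hp ha hrel hb, mul_right_comm, zpow_mul, ha', one_zpow]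

theorem inv_mul_mul_eq_pow_one_add (hp : 3 ∣ p) (ha : a ^ (3 * p) = 1)
    (hrel : b⁻¹ * a * b = a ^ (1 + p)) (hb : b ^ p = 1) :
    (a ^ ((p : ℤ) - 3) * b)⁻¹ * (a ^ (-2 : ℤ) * b) * (a ^ ((p : ℤ) - 3) * b) =
      (a ^ (-2 : ℤ) * b) ^ (1 + p) := by
  have hrel' : b⁻¹ * a * b = a ^ (1 + p : ℤ) := by exact_mod_cast hrel
  have ha' : a ^ (3 * p : ℤ) = 1 := by exact_mod_cast ha
  have hcomm : Commute (a ^ (-2 * p : ℤ)) b :=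
    commute_zpow_of_three_dvd ha hrel (Dvd.dvd.mul_left (Int.natCast_dvd_natCast.2 hp) _)
  calc (a ^ ((p : ℤ) - 3) * b)⁻¹ * (a ^ (-2 : ℤ) * b) * (a ^ ((p : ℤ) - 3) * b)
      = b⁻¹ * a ^ (1 - p : ℤ) * b * a ^ ((p : ℤ) - 3) * b := by group
    _ = a ^ ((1 + p) * (1 - p) + (p - 3) : ℤ) * b := by
      rw [inv_mul_zpow_mul_of_inv_mul_mul_eq hrel', zpow_add]
    _ = a ^ (-2 + -2 * p : ℤ) * b := by
      congr 1
      refine zpow_eq_zpow_of_modEq ha' (Int.modEq_iff_dvd.2 ?_)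
      obtain ⟨q, rfl⟩ := hp
      exact ⟨q - 1, by push_cast; ring⟩
    _ = (a ^ (-2 : ℤ) * b) ^ (1 + p) := by
      rw [zpow_add, mul_assoc, hcomm.eq, ← mul_assoc, add_comm, pow_succ',
        zpow_mul_pow_eq_zpow hp ha hrel hb]

end Metacyclic

theorem stmt_13 (t : ℕ) (ht : 0 < t) {G : Type*} [Group G] (a b : G)
    (ha : a ^ 3 ^ (t + 1) = 1) (hb : b ^ 3 ^ t = 1)
    (hrel : b⁻¹ * a * b = a ^ (1 + 3 ^ t)) :
    (a ^ (-2 : ℤ) * b) ^ 3 ^ (t + 1) = 1 ∧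
    (a ^ (3 ^ t - 3) * b) ^ 3 ^ t = 1 ∧
    (a ^ (3 ^ t - 3) * b)⁻¹ * (a ^ (-2 : ℤ) * b) * (a ^ (3 ^ t - 3) * b) =
      (a ^ (-2 : ℤ) * b) ^ (1 + 3 ^ t) := by
  have hp : 3 ∣ 3 ^ t := dvd_pow_self 3 ht.ne'
  rw [pow_succ'] at ha ⊢
  have hy : a ^ (3 ^ t - 3) = a ^ (((3 ^ t : ℕ) : ℤ) - 3) := by
    rw [← zpow_natCast, Nat.cast_sub (Nat.le_of_dvd (by positivity) hp), Nat.cast_ofNat]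
  rw [hy]
  have hv : (3 : ℤ) ∣ ((3 ^ t : ℕ) : ℤ) - 3 := (Int.natCast_dvd_natCast.2 hp).sub (dvd_refl 3)
  exact ⟨Metacyclic.zpow_mul_pow_three_mul_eq_one hp ha hrel hb _,
    Metacyclic.zpow_mul_pow_eq_one_of_three_dvd hp ha hrel hb hv,
    Metacyclic.inv_mul_mul_eq_pow_one_add hp ha hrel hb⟩
end

section
/- Let t be a positive integer and G = ⟨a, b | a^(3^(t+1)) = b^(3^t) = 1, b^(-1)ab = a^(1+3^t)⟩, and let α be the automorphism of G with a^α = a^(-2)b and b^α = a^(3^t-3)b. Then (a^(-1)b)^α = a^(-1), so the set S = {1, a, a^(-1)b} satisfies S^α = a^(-1)·S. -/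
theorem stmt_18 (t : ℕ) (ht : 0 < t) {G : Type*} [Group G] (a b : G)
    (ha : a ^ 3 ^ (t + 1) = 1) (hb : b ^ 3 ^ t = 1)
    (hrel : b⁻¹ * a * b = a ^ (1 + 3 ^ t))
    (α : G ≃* G)
    (hαa : α a = a ^ (-2 : ℤ) * b) (hαb : α b = a ^ (3 ^ t - 3) * b) :
    α (a⁻¹ * b) = a⁻¹ ∧
      (⇑α) '' ({1, a, a⁻¹ * b} : Set G) =
        (fun s => a⁻¹ * s) '' ({1, a, a⁻¹ * b} : Set G) := by
  have h3 : 3 ≤ 3 ^ t := by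
    calc (3:ℕ) = 3 ^ 1 := by norm_num
    _ ≤ 3 ^ t := Nat.pow_le_pow_right (by norm_num) ht
  -- a ^ 3^(2t) = 1
  have hbig : a ^ 3 ^ (2 * t) = 1 := by
    have h2t : 2 * t = (t + 1) + (t - 1) := by omega
    rw [h2t, pow_add, pow_mul, ha, one_pow]
  have hconj : b⁻¹ * a ^ (3 ^ t - 1) * b = a ^ ((3 ^ t - 1) * (1 + 3 ^ t)) := by
    have h := conj_pow (a := b⁻¹) (b := a) (i := 3 ^ t - 1)
    rw [inv_inv] at h
    rw [← h, hrel, ← pow_mul, Nat.mul_comm]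
  have hkey : a ^ ((3 ^ t - 1) * (1 + 3 ^ t)) = a⁻¹ := by
    have hm : (3 ^ t - 1) * (1 + 3 ^ t) = 3 ^ (2 * t) - 1 := by
      have h1 : 1 ≤ 3 ^ t := Nat.one_le_pow _ _ (by norm_num)
      have h2 : 1 ≤ 3 ^ (2 * t) := Nat.one_le_pow _ _ (by norm_num)
      rw [show 3 ^ (2*t) = 3 ^ t * 3 ^ t by rw [two_mul, pow_add]] at h2 ⊢
      zify [h1, h2]
      ring
    rw [hm]
    have h1 : 1 ≤ 3 ^ (2 * t) := Nat.one_le_pow _ _ (by norm_num)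
    have : a ^ (3 ^ (2 * t) - 1) * a = 1 := by
      rw [← pow_succ, Nat.sub_add_cancel h1, hbig]
    exact eq_inv_of_mul_eq_one_left this
  have h1 : α (a⁻¹ * b) = a⁻¹ := by
    rw [map_mul, map_inv, hαa, hαb]
    have hpow : a ^ (2:ℕ) * a ^ (3 ^ t - 3) = a ^ (3 ^ t - 1) := by
      rw [← pow_add]
      congr 1
      omega
    calc (a ^ (-2:ℤ) * b)⁻¹ * (a ^ (3 ^ t - 3) * b)
        = b⁻¹ * (a ^ (2:ℕ) * a ^ (3 ^ t - 3)) * b := by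
          rw [mul_inv_rev, zpow_neg]
          group
      _ = b⁻¹ * a ^ (3 ^ t - 1) * b := by rw [hpow]
      _ = a⁻¹ := by rw [hconj, hkey]
  refine ⟨h1, ?_⟩
  have h2 : a⁻¹ * (a⁻¹ * b) = a ^ (-2:ℤ) * b := by group
  rw [Set.image_insert_eq, Set.image_insert_eq, Set.image_singleton,
      Set.image_insert_eq, Set.image_insert_eq, Set.image_singleton,
      map_one, hαa, h1, h2, mul_one, inv_mul_cancel]
  ext x
  simp only [Set.mem_insert_iff, Set.mem_singleton_iff]
  tauto
end
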